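/- (Global Maximum Waveform Time Span Theorem, N ≥ 2 sub-domains.) Let a > 0, T_s ∈ ℝ, τ > 0, and N ≥ 2. Let A₁ < A₂ < ⋯ < A_N and B₁ < B₂ < ⋯ < B_N be reals defining sub-domains Ωᵢ = [Aᵢ, Bᵢ] with A_{i+1} < Bᵢ for 1 ≤ i ≤ N−1 (consecutive sub-domains overlap) and Bᵢ ≤ A_{i+2} for 1 ≤ i ≤ N−2 (non-consecutive sub-domains are disjoint up to endpoints). Let u be a classical solution of the 1-D wave equation with speed a on [A₁, B_N] × [T_s, T_s + τ]. For each i, let p̂ᵢ be a classical solution of the 1-D wave equation with speed a on Ωᵢ × [T_s, T_s + τ] with initial data p̂ᵢ(x, T_s) = u(x, T_s) and ∂p̂ᵢ/∂t(x, T_s) = ∂u/∂t(x, T_s) for x ∈ Ωᵢ, with p̂₁(A₁, t) = u(A₁, t) and p̂_N(B_N, t) = u(B_N, t) for all t (outer Dirichlet data from u), and with zero flux at every inner boundary: ∂p̂ᵢ/∂x(Bᵢ, t) = 0 for i < N and ∂p̂ᵢ/∂x(Aᵢ, t) = 0 for i > 1, for all t ∈ [T_s, T_s + τ]. Define the global maximum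 waveform time span Δt := min over 1 ≤ i ≤ N−1 of (Bᵢ − A_{i+1})/(2a). Then for every i and every t ∈ [T_s, T_s + τ] with t − T_s ≤ Δt, the predictive boundary output flux waveforms equal those of the true solution: ∂p̂ᵢ/∂x(A_{i+1}, t) = ∂u/∂x(A_{i+1}, t) for 1 ≤ i ≤ N−1, and ∂p̂ᵢ/∂x(B_{i−1}, t) = ∂u/∂x(B_{i−1}, t) for 2 ≤ i ≤ N. -/

import Mathlib

/-- `p` is a classical solution of the 1-D wave equation with speed `a` on
`[c, d] × [T₀, T₁]`: it is twice continuously differentiable on an open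
neighbourhood of the rectangle and satisfies
`∂²p/∂t² = a² ∂²p/∂x²` there. -/
def IsWaveSolution (a c d T₀ T₁ : ℝ) (p : ℝ → ℝ → ℝ) : Prop :=
  ∃ U : Set (ℝ × ℝ), IsOpen U ∧ (Set.Icc c d ×ˢ Set.Icc T₀ T₁) ⊆ U ∧
    ContDiffOn ℝ 2 (fun q : ℝ × ℝ => p q.1 q.2) U ∧
    ∀ x ∈ Set.Icc c d, ∀ t ∈ Set.Icc T₀ T₁,
      deriv (deriv (fun s => p x s)) t = a ^ 2 * deriv (deriv (fun y => p y t)) x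

/-!
For `k = ±a` the combination `∂ₜp + k ∂ₓp` of a classical solution is constant along the
characteristics `x + k t = const`: its derivative along them is `∂ₜ²p - k² ∂ₓ²p = 0`, by the
symmetry of second derivatives. Two solutions with the same Cauchy data therefore have the same
`∂ₓp`, which is the difference of the two invariants divided by `2a`, at every point whose two
backward characteristics reach the initial line inside the sub-domain. At an outer boundary with
Dirichlet data taken from `u` also `∂ₜp` agrees, so a characteristic may be reflected there.
Within `Δt` the characteristics from an output boundary travel a distance of at most half the
overlap, so, as non-consecutive sub-domains do not overlap, they never reach an inner boundary.
-/

open Set Function Topology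

section Calculus

variable {E F : Type*} [NormedAddCommGroup E] [NormedSpace ℝ E]
  [NormedAddCommGroup F] [NormedSpace ℝ F]

theorem deriv_eq_of_eqOn_Icc {f g : ℝ → F} {c d x : ℝ} (hcd : c < d) (hx : x ∈ Icc c d)
    (hf : DifferentiableAt ℝ f x) (hg : DifferentiableAt ℝ g x) (hfg : EqOn f g (Icc c d)) :
    deriv f x = deriv g x := by
  have hu : UniqueDiffWithinAt ℝ (Icc c d) x := uniqueDiffOn_Icc hcd x hx
  rw [← hf.derivWithin hu, ← hg.derivWithin hu, derivWithin_congr hfg (hfg hx)]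

theorem hasDerivAt_fderiv_comp_apply {U : Set E} {Q : E → F} (hU : IsOpen U)
    (hQ : ContDiffOn ℝ 2 Q U) {γ : ℝ → E} {v : E} {s : ℝ} (hγ : HasDerivAt γ v s)
    (hs : γ s ∈ U) (w : E) :
    HasDerivAt (fun r => fderiv ℝ Q (γ r) w) (fderiv ℝ (fderiv ℝ Q) (γ s) v w) s := by
  have hQ' : DifferentiableAt ℝ (fderiv ℝ Q) (γ s) :=
    ((hQ.fderiv_of_isOpen hU (by norm_num)).differentiableOn one_ne_zero).differentiableAt
      (hU.mem_nhds hs)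
  exact (ContinuousLinearMap.apply ℝ F w).hasFDerivAt.comp_hasDerivAt s
    (hQ'.hasFDerivAt.comp_hasDerivAt s hγ)

theorem deriv_deriv_comp_eq_fderiv_fderiv {U : Set E} {Q : E → F} (hU : IsOpen U)
    (hQ : ContDiffOn ℝ 2 Q U) {γ : ℝ → E} {v : E} (hγ : ∀ r, HasDerivAt γ v r) {s : ℝ}
    (hs : γ s ∈ U) :
    deriv (deriv fun r => Q (γ r)) s = fderiv ℝ (fderiv ℝ Q) (γ s) v v := by
  have hderiv : deriv (fun r => Q (γ r)) =ᶠ[𝓝 s] fun r => fderiv ℝ Q (γ r) v := by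
    filter_upwards [(hγ s).continuousAt.preimage_mem_nhds (hU.mem_nhds hs)] with r hr
    exact (((hQ.differentiableOn two_ne_zero).differentiableAt
      (hU.mem_nhds hr)).hasFDerivAt.comp_hasDerivAt r (hγ r)).deriv
  rw [hderiv.deriv_eq]
  exact (hasDerivAt_fderiv_comp_apply hU hQ (hγ s) hs v).deriv

end Calculus

section WaveEquation

variable {a c d T₀ T₁ : ℝ} {p : ℝ → ℝ → ℝ}

noncomputable def riemannInvariant (k : ℝ) (p : ℝ → ℝ → ℝ) (x t : ℝ) : ℝ :=
  deriv (fun s => p x s) t + k * deriv (fun y => p y t) x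

theorem riemannInvariant_eq_fderiv {k x t : ℝ} (h : DifferentiableAt ℝ (uncurry p) (x, t)) :
    riemannInvariant k p x t = fderiv ℝ (uncurry p) (x, t) (k, 1) := by
  have hx : HasDerivAt (fun y => p y t) (fderiv ℝ (uncurry p) (x, t) (1, 0)) x :=
    (h.hasFDerivAt.comp_hasDerivAt x ((hasDerivAt_id' x).prodMk (hasDerivAt_const x t)) :)
  have ht : HasDerivAt (fun s => p x s) (fderiv ℝ (uncurry p) (x, t) (0, 1)) t :=
    (h.hasFDerivAt.comp_hasDerivAt t ((hasDerivAt_const t x).prodMk (hasDerivAt_id' t)) :)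
  have hk : ((k, 1) : ℝ × ℝ) = (0, 1) + k • (1, 0) := by simp
  rw [riemannInvariant, hx.deriv, ht.deriv, hk, map_add, map_smul, smul_eq_mul]

namespace IsWaveSolution

theorem mono {c' d' T₀' T₁' : ℝ} (hw : IsWaveSolution a c d T₀ T₁ p)
    (hx : Icc c' d' ⊆ Icc c d) (ht : Icc T₀' T₁' ⊆ Icc T₀ T₁) :
    IsWaveSolution a c' d' T₀' T₁' p := by
  obtain ⟨U, hU, hsub, hC, hwave⟩ := hw
  exact ⟨U, hU, (prod_mono hx ht).trans hsub, hC, fun x hx' t ht' => hwave x (hx hx') t (ht ht')⟩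

theorem differentiableAt (hw : IsWaveSolution a c d T₀ T₁ p) {q : ℝ × ℝ}
    (hq : q ∈ Icc c d ×ˢ Icc T₀ T₁) : DifferentiableAt ℝ (uncurry p) q := by
  obtain ⟨U, hU, hsub, hC, -⟩ := hw
  exact (hC.differentiableOn two_ne_zero).differentiableAt (hU.mem_nhds (hsub hq))

theorem differentiableAt_fst (hw : IsWaveSolution a c d T₀ T₁ p) {x t : ℝ}
    (hx : x ∈ Icc c d) (ht : t ∈ Icc T₀ T₁) : DifferentiableAt ℝ (fun y => p y t) x :=
  ((hw.differentiableAt ⟨hx, ht⟩).comp x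
    ((differentiableAt_id).prodMk (differentiableAt_const t)) :)

theorem differentiableAt_snd (hw : IsWaveSolution a c d T₀ T₁ p) {x t : ℝ}
    (hx : x ∈ Icc c d) (ht : t ∈ Icc T₀ T₁) : DifferentiableAt ℝ (fun s => p x s) t :=
  ((hw.differentiableAt ⟨hx, ht⟩).comp t
    ((differentiableAt_const x).prodMk (differentiableAt_id)) :)

theorem fderiv_fderiv_apply_characteristic (hw : IsWaveSolution a c d T₀ T₁ p) {k : ℝ}
    (hk : k ^ 2 = a ^ 2) {q : ℝ × ℝ} (hq : q ∈ Icc c d ×ˢ Icc T₀ T₁) :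
    fderiv ℝ (fderiv ℝ (uncurry p)) q (-k, 1) (k, 1) = 0 := by
  obtain ⟨U, hU, hsub, hC, hwave⟩ := hw
  obtain ⟨x, t⟩ := q
  set H := fderiv ℝ (fderiv ℝ (uncurry p)) (x, t)
  have hxx : deriv (deriv fun y => p y t) x = H (1, 0) (1, 0) :=
    deriv_deriv_comp_eq_fderiv_fderiv hU hC
      (fun r => (hasDerivAt_id r).prodMk (hasDerivAt_const r t)) (hsub hq)
  have htt : deriv (deriv fun s => p x s) t = H (0, 1) (0, 1) :=
    deriv_deriv_comp_eq_fderiv_fderiv hU hC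
      (fun r => (hasDerivAt_const r x).prodMk (hasDerivAt_id r)) (hsub hq)
  have hsymm : H (1, 0) (0, 1) = H (0, 1) (1, 0) :=
    ((hC.contDiffAt (hU.mem_nhds (hsub hq))).isSymmSndFDerivAt
      (by simp [minSmoothness_of_isRCLikeNormedField])) _ _
  have hwave' := hwave x hq.1 t hq.2
  rw [hxx, htt] at hwave'
  have hm : ((-k, 1) : ℝ × ℝ) = (0, 1) - k • (1, 0) := by simp
  have hp : ((k, 1) : ℝ × ℝ) = (0, 1) + k • (1, 0) := by simp
  rw [hm, hp]
  simp only [map_sub, map_add, map_smul, sub_apply, smul_apply, smul_eq_mul]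
  linear_combination hwave' - k * hsymm - H (1, 0) (1, 0) * hk

theorem riemannInvariant_eq_of_characteristic (hw : IsWaveSolution a c d T₀ T₁ p) {k : ℝ}
    (hk : k ^ 2 = a ^ 2) {x t t' : ℝ} (h : (x, t) ∈ Icc c d ×ˢ Icc T₀ T₁)
    (h' : (x + k * (t - t'), t') ∈ Icc c d ×ˢ Icc T₀ T₁) :
    riemannInvariant k p x t = riemannInvariant k p (x + k * (t - t')) t' := by
  obtain ⟨U, hU, hsub, hC, -⟩ := id hw
  replace hC : ContDiffOn ℝ 2 (uncurry p) U := hC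
  set γ := AffineMap.lineMap (k := ℝ) ((x, t) : ℝ × ℝ) (x + k * (t - t'), t')
  have hγ : ∀ θ ∈ Icc (0 : ℝ) 1, γ θ ∈ Icc c d ×ˢ Icc T₀ T₁ :=
    fun θ hθ => ((convex_Icc c d).prod (convex_Icc T₀ T₁)).lineMap_mem h h' hθ
  have hdir : ((x + k * (t - t'), t') : ℝ × ℝ) - (x, t) = (t' - t) • ((-k, 1) : ℝ × ℝ) := by
    ext <;> simp; ring
  have hg : ∀ θ ∈ Icc (0 : ℝ) 1, HasDerivAt (fun θ => fderiv ℝ (uncurry p) (γ θ) (k, 1)) 0 θ := by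
    intro θ hθ
    have := hasDerivAt_fderiv_comp_apply hU hC AffineMap.hasDerivAt_lineMap (hsub (hγ θ hθ)) (k, 1)
    rwa [hdir, map_smul, smul_apply, hw.fderiv_fderiv_apply_characteristic hk (hγ θ hθ),
      smul_zero] at this
  have hconst := constant_of_has_deriv_right_zero
    (fun θ hθ => (hg θ hθ).continuousAt.continuousWithinAt)
    (fun θ hθ => (hg θ (Ico_subset_Icc_self hθ)).hasDerivWithinAt) 1 (right_mem_Icc.2 zero_le_one)
  simp only [γ, AffineMap.lineMap_apply_zero, AffineMap.lineMap_apply_one] at hconst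
  rw [riemannInvariant_eq_fderiv (hw.differentiableAt h),
    riemannInvariant_eq_fderiv (hw.differentiableAt h'), hconst]

end IsWaveSolution

end WaveEquation

theorem deriv_eq_of_riemannInvariant_eq {a x t : ℝ} {p u : ℝ → ℝ → ℝ} (ha : a ≠ 0)
    (hplus : riemannInvariant a p x t = riemannInvariant a u x t)
    (hminus : riemannInvariant (-a) p x t = riemannInvariant (-a) u x t) :
    deriv (fun y => p y t) x = deriv (fun y => u y t) x := by
  unfold riemannInvariant at hplus hminus
  exact mul_left_cancel₀ (mul_ne_zero two_ne_zero ha) (by linear_combination hplus - hminus)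

structure SameCauchyData (a c d T₀ T₁ : ℝ) (p u : ℝ → ℝ → ℝ) : Prop where
  lt : c < d
  isWaveSolution_left : IsWaveSolution a c d T₀ T₁ p
  isWaveSolution_right : IsWaveSolution a c d T₀ T₁ u
  eq_init : ∀ x ∈ Icc c d, p x T₀ = u x T₀
  deriv_eq_init : ∀ x ∈ Icc c d, deriv (fun s => p x s) T₀ = deriv (fun s => u x s) T₀

namespace SameCauchyData

variable {a c d T₀ T₁ k x t : ℝ} {p u : ℝ → ℝ → ℝ}

theorem riemannInvariant_eq_of_foot_mem (h : SameCauchyData a c d T₀ T₁ p u)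
    (hk : k ^ 2 = a ^ 2) (hx : x ∈ Icc c d) (ht : t ∈ Icc T₀ T₁)
    (hfoot : x + k * (t - T₀) ∈ Icc c d) :
    riemannInvariant k p x t = riemannInvariant k u x t := by
  have hT₀ : T₀ ∈ Icc T₀ T₁ := left_mem_Icc.2 (ht.1.trans ht.2)
  have hp := h.isWaveSolution_left
  have hu := h.isWaveSolution_right
  rw [hp.riemannInvariant_eq_of_characteristic hk ⟨hx, ht⟩ ⟨hfoot, hT₀⟩,
    hu.riemannInvariant_eq_of_characteristic hk ⟨hx, ht⟩ ⟨hfoot, hT₀⟩, riemannInvariant,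
    riemannInvariant, h.deriv_eq_init _ hfoot,
    deriv_eq_of_eqOn_Icc h.lt hfoot (hp.differentiableAt_fst hfoot hT₀)
      (hu.differentiableAt_fst hfoot hT₀) h.eq_init]

theorem riemannInvariant_eq_of_reflection (h : SameCauchyData a c d T₀ T₁ p u)
    (hk : k ^ 2 = a ^ 2) (hT : T₀ < T₁) {b t₁ : ℝ} (hD : ∀ s ∈ Icc T₀ T₁, p b s = u b s)
    (hx : x ∈ Icc c d) (ht : t ∈ Icc T₀ T₁) (ht₁ : t₁ ∈ Icc T₀ t)
    (hb : x + k * (t - t₁) = b) (hb' : b ∈ Icc c d) (hfoot : b - k * (t₁ - T₀) ∈ Icc c d) :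
    riemannInvariant k p x t = riemannInvariant k u x t := by
  have hp := h.isWaveSolution_left
  have hu := h.isWaveSolution_right
  have ht₁' : t₁ ∈ Icc T₀ T₁ := ⟨ht₁.1, ht₁.2.trans ht.2⟩
  have hb₁ : (x + k * (t - t₁), t₁) ∈ Icc c d ×ˢ Icc T₀ T₁ := ⟨hb ▸ hb', ht₁'⟩
  have hreflected : riemannInvariant (-k) p b t₁ = riemannInvariant (-k) u b t₁ :=
    h.riemannInvariant_eq_of_foot_mem (by rw [neg_sq, hk]) hb' ht₁'
      (by rwa [neg_mul, ← sub_eq_add_neg])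
  have hdt : deriv (fun s => p b s) t₁ = deriv (fun s => u b s) t₁ :=
    deriv_eq_of_eqOn_Icc hT ht₁' (hp.differentiableAt_snd hb' ht₁')
      (hu.differentiableAt_snd hb' ht₁') hD
  rw [hp.riemannInvariant_eq_of_characteristic hk ⟨hx, ht⟩ hb₁,
    hu.riemannInvariant_eq_of_characteristic hk ⟨hx, ht⟩ hb₁, hb]
  unfold riemannInvariant at hreflected ⊢
  linear_combination 2 * hdt - hreflected

theorem deriv_eq_of_foot_mem (h : SameCauchyData a c d T₀ T₁ p u) (ha : 0 < a)
    (hx : x ∈ Icc c d) (ht : t ∈ Icc T₀ T₁) (hleft : c ≤ x - a * (t - T₀))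
    (hright : x + a * (t - T₀) ≤ d) :
    deriv (fun y => p y t) x = deriv (fun y => u y t) x := by
  have hat : 0 ≤ a * (t - T₀) := mul_nonneg ha.le (sub_nonneg.2 ht.1)
  exact deriv_eq_of_riemannInvariant_eq ha.ne'
    (h.riemannInvariant_eq_of_foot_mem rfl hx ht ⟨by linarith, hright⟩)
    (h.riemannInvariant_eq_of_foot_mem (neg_sq a) hx ht ⟨by linarith, by linarith⟩)

theorem deriv_eq_of_dirichlet_left (h : SameCauchyData a c d T₀ T₁ p u) (ha : 0 < a)
    (hT : T₀ < T₁) (hD : ∀ s ∈ Icc T₀ T₁, p c s = u c s) (hx : x ∈ Icc c d)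
    (ht : t ∈ Icc T₀ T₁) (hright : x + a * (t - T₀) ≤ d) :
    deriv (fun y => p y t) x = deriv (fun y => u y t) x := by
  have hat : 0 ≤ a * (t - T₀) := mul_nonneg ha.le (sub_nonneg.2 ht.1)
  by_cases hleft : c ≤ x - a * (t - T₀)
  · exact h.deriv_eq_of_foot_mem ha hx ht hleft hright
  refine deriv_eq_of_riemannInvariant_eq ha.ne'
    (h.riemannInvariant_eq_of_foot_mem rfl hx ht ⟨by linarith [hx.1], hright⟩) ?_
  -- the backward characteristic through `(x, t)` hits `x = c` at time `t₁`
  set t₁ := t - (x - c) / a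
  have ht₁ : a * (t - t₁) = x - c := by simp only [t₁]; field_simp; ring
  refine h.riemannInvariant_eq_of_reflection (neg_sq a) hT hD hx ht (t₁ := t₁) ⟨?_, ?_⟩
    (by linear_combination -ht₁) (left_mem_Icc.2 h.lt.le) ⟨?_, ?_⟩
  · nlinarith
  · nlinarith [hx.1]
  · nlinarith
  · nlinarith [hx.1]

theorem deriv_eq_of_dirichlet_right (h : SameCauchyData a c d T₀ T₁ p u) (ha : 0 < a)
    (hT : T₀ < T₁) (hD : ∀ s ∈ Icc T₀ T₁, p d s = u d s) (hx : x ∈ Icc c d)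
    (ht : t ∈ Icc T₀ T₁) (hleft : c ≤ x - a * (t - T₀)) :
    deriv (fun y => p y t) x = deriv (fun y => u y t) x := by
  have hat : 0 ≤ a * (t - T₀) := mul_nonneg ha.le (sub_nonneg.2 ht.1)
  by_cases hright : x + a * (t - T₀) ≤ d
  · exact h.deriv_eq_of_foot_mem ha hx ht hleft hright
  refine deriv_eq_of_riemannInvariant_eq ha.ne' ?_
    (h.riemannInvariant_eq_of_foot_mem (neg_sq a) hx ht ⟨by linarith, by linarith [hx.2]⟩)
  set t₁ := t - (d - x) / a
  have ht₁ : a * (t - t₁) = d - x := by simp only [t₁]; field_simp; ring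
  refine h.riemannInvariant_eq_of_reflection rfl hT hD hx ht (t₁ := t₁) ⟨?_, ?_⟩
    (by linear_combination ht₁) (right_mem_Icc.2 h.lt.le) ⟨?_, ?_⟩
  · nlinarith
  · nlinarith [hx.2]
  · nlinarith [hx.2]
  · nlinarith

end SameCauchyData

theorem global_max_waveform_time_span_general
    (a T_s τ : ℝ) (N : ℕ) (A B : ℕ → ℝ)
    (ha : 0 < a) (hτ : 0 < τ)
    (hAmono : ∀ i, 1 ≤ i → i + 1 ≤ N → A i < A (i + 1))
    (hBmono : ∀ i, 1 ≤ i → i + 1 ≤ N → B i < B (i + 1))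
    (hAB : ∀ i, 1 ≤ i → i ≤ N → A i < B i)
    (hoverlap : ∀ i, 1 ≤ i → i + 1 ≤ N → A (i + 1) < B i)
    (hdisjoint : ∀ i, 1 ≤ i → i + 2 ≤ N → B i ≤ A (i + 2))
    (u : ℝ → ℝ → ℝ) (phat : ℕ → ℝ → ℝ → ℝ)
    (hu : IsWaveSolution a (A 1) (B N) T_s (T_s + τ) u)
    (hp : ∀ i, 1 ≤ i → i ≤ N →
      IsWaveSolution a (A i) (B i) T_s (T_s + τ) (phat i))
    (hinit : ∀ i, 1 ≤ i → i ≤ N → ∀ x ∈ Set.Icc (A i) (B i),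
      phat i x T_s = u x T_s)
    (hinit' : ∀ i, 1 ≤ i → i ≤ N → ∀ x ∈ Set.Icc (A i) (B i),
      deriv (fun s => phat i x s) T_s = deriv (fun s => u x s) T_s)
    (hDirL : ∀ t ∈ Set.Icc T_s (T_s + τ), phat 1 (A 1) t = u (A 1) t)
    (hDirR : ∀ t ∈ Set.Icc T_s (T_s + τ), phat N (B N) t = u (B N) t)
    (Δt : ℝ)
    (hΔt : IsGLB ((fun i => (B i - A (i + 1)) / (2 * a)) ''
      {i : ℕ | 1 ≤ i ∧ i + 1 ≤ N}) Δt) :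
    (∀ i, 1 ≤ i → i + 1 ≤ N → ∀ t ∈ Set.Icc T_s (T_s + τ), t - T_s ≤ Δt →
      deriv (fun y => phat i y t) (A (i + 1)) = deriv (fun y => u y t) (A (i + 1))) ∧
    (∀ i, 2 ≤ i → i ≤ N → ∀ t ∈ Set.Icc T_s (T_s + τ), t - T_s ≤ Δt →
      deriv (fun y => phat i y t) (B (i - 1)) = deriv (fun y => u y t) (B (i - 1))) := by
  have hT : T_s < T_s + τ := by linarith
  have hAmono' : MonotoneOn A (Icc 1 N) := monotoneOn_of_le_succ ordConnected_Icc
    fun i _ hi hi' => (hAmono i hi.1 (by simpa using hi'.2)).le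
  have hBmono' : MonotoneOn B (Icc 1 N) := monotoneOn_of_le_succ ordConnected_Icc
    fun i _ hi hi' => (hBmono i hi.1 (by simpa using hi'.2)).le
  have hdata : ∀ i, 1 ≤ i → i ≤ N →
      SameCauchyData a (A i) (B i) T_s (T_s + τ) (phat i) u := fun i h1 h2 =>
    ⟨hAB i h1 h2, hp i h1 h2, hu.mono (Icc_subset_Icc (hAmono' ⟨le_rfl, by omega⟩ ⟨h1, h2⟩ h1)
      (hBmono' ⟨h1, h2⟩ ⟨by omega, le_rfl⟩ h2)) le_rfl, hinit i h1 h2, hinit' i h1 h2⟩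
  have hspan : ∀ j, 1 ≤ j → j + 1 ≤ N → ∀ t, t - T_s ≤ Δt →
      2 * (a * (t - T_s)) ≤ B j - A (j + 1) := fun j h1 h2 t ht => by
    linarith [(le_div_iff₀ (by positivity)).1 (ht.trans (hΔt.1 ⟨j, ⟨h1, h2⟩, rfl⟩))]
  refine ⟨fun i hi hiN t ht hts => ?_, fun i hi hiN t ht hts => ?_⟩ <;>
    have hat : 0 ≤ a * (t - T_s) := mul_nonneg ha.le (sub_nonneg.2 ht.1)
  · have hx : A (i + 1) ∈ Icc (A i) (B i) := ⟨(hAmono i hi hiN).le, (hoverlap i hi hiN).le⟩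
    have hright : A (i + 1) + a * (t - T_s) ≤ B i := by linarith [hspan i hi hiN t hts]
    rcases hi.eq_or_lt with rfl | hi
    · exact (hdata 1 le_rfl (by omega)).deriv_eq_of_dirichlet_left ha hT hDirL hx ht hright
    obtain ⟨j, rfl⟩ : ∃ j, i = j + 1 := ⟨i - 1, by omega⟩
    refine (hdata (j + 1) (by omega) (by omega)).deriv_eq_of_foot_mem ha hx ht ?_ hright
    linarith [hspan j (by omega) (by omega) t hts,
      (hdisjoint j (by omega) hiN : B j ≤ A (j + 1 + 1))]
  · obtain ⟨j, rfl⟩ : ∃ j, i = j + 1 := ⟨i - 1, by omega⟩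
    have hx : B j ∈ Icc (A (j + 1)) (B (j + 1)) :=
      ⟨(hoverlap j (by omega) hiN).le, (hBmono j (by omega) hiN).le⟩
    have hleft : A (j + 1) ≤ B j - a * (t - T_s) := by linarith [hspan j (by omega) hiN t hts]
    simp only [Nat.add_sub_cancel]
    rcases hiN.eq_or_lt with hN | hN
    · subst hN
      exact (hdata (j + 1) (by omega) le_rfl).deriv_eq_of_dirichlet_right ha hT hDirR hx ht hleft
    refine (hdata (j + 1) (by omega) hN.le).deriv_eq_of_foot_mem ha hx ht hleft ?_
    linarith [hspan (j + 1) (by omega) hN t hts,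
      (hdisjoint j (by omega) hN : B j ≤ A (j + 1 + 1))]

/-- Global Maximum Waveform Time Span Theorem (N ≥ 2 sub-domains): within the
global maximum waveform time span Δt = minᵢ (Bᵢ − A_{i+1})/(2a), the
predictive boundary output flux waveform of each sub-domain equals that of the
true solution. -/
theorem global_max_waveform_time_span
    (a T_s τ : ℝ) (N : ℕ) (A B : ℕ → ℝ)
    (ha : 0 < a) (hτ : 0 < τ) (hN : 2 ≤ N)
    (hAmono : ∀ i, 1 ≤ i → i + 1 ≤ N → A i < A (i + 1))
    (hBmono : ∀ i, 1 ≤ i → i + 1 ≤ N → B i < B (i + 1))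
    (hAB : ∀ i, 1 ≤ i → i ≤ N → A i < B i)
    (hoverlap : ∀ i, 1 ≤ i → i + 1 ≤ N → A (i + 1) < B i)
    (hdisjoint : ∀ i, 1 ≤ i → i + 2 ≤ N → B i ≤ A (i + 2))
    (u : ℝ → ℝ → ℝ) (phat : ℕ → ℝ → ℝ → ℝ)
    (hu : IsWaveSolution a (A 1) (B N) T_s (T_s + τ) u)
    (hp : ∀ i, 1 ≤ i → i ≤ N →
      IsWaveSolution a (A i) (B i) T_s (T_s + τ) (phat i))
    (hinit : ∀ i, 1 ≤ i → i ≤ N → ∀ x ∈ Set.Icc (A i) (B i),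
      phat i x T_s = u x T_s)
    (hinit' : ∀ i, 1 ≤ i → i ≤ N → ∀ x ∈ Set.Icc (A i) (B i),
      deriv (fun s => phat i x s) T_s = deriv (fun s => u x s) T_s)
    (hDirL : ∀ t ∈ Set.Icc T_s (T_s + τ), phat 1 (A 1) t = u (A 1) t)
    (hDirR : ∀ t ∈ Set.Icc T_s (T_s + τ), phat N (B N) t = u (B N) t)
    (hzeroR : ∀ i, 1 ≤ i → i + 1 ≤ N → ∀ t ∈ Set.Icc T_s (T_s + τ),
      deriv (fun y => phat i y t) (B i) = 0)
    (hzeroL : ∀ i, 2 ≤ i → i ≤ N → ∀ t ∈ Set.Icc T_s (T_s + τ),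
      deriv (fun y => phat i y t) (A i) = 0)
    (Δt : ℝ)
    (hΔt : IsGLB ((fun i => (B i - A (i + 1)) / (2 * a)) ''
      {i : ℕ | 1 ≤ i ∧ i + 1 ≤ N}) Δt) :
    (∀ i, 1 ≤ i → i + 1 ≤ N → ∀ t ∈ Set.Icc T_s (T_s + τ), t - T_s ≤ Δt →
      deriv (fun y => phat i y t) (A (i + 1)) = deriv (fun y => u y t) (A (i + 1))) ∧
    (∀ i, 2 ≤ i → i ≤ N → ∀ t ∈ Set.Icc T_s (T_s + τ), t - T_s ≤ Δt →
      deriv (fun y => phat i y t) (B (i - 1)) = deriv (fun y => u y t) (B (i - 1))) :=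
  global_max_waveform_time_span_general a T_s τ N A B ha hτ hAmono hBmono hAB hoverlap hdisjoint u
    phat hu hp hinit hinit' hDirL hDirR Δt hΔt
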